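/- For interval representations I[a,b] and I[c,d] of an A_n type quiver with any orientation, the dimension of the space of representation morphisms Hom(I[a,b], I[c,d]) as a K-vector space is either 0 or 1. -/

import Mathlib

/-- Indicator of the interval `[a,b]` at vertex `i`, valued in `K`. -/
def ind (K : Type*) [Field K] (a b i : ℕ) : K := if a ≤ i ∧ i ≤ b then 1 else 0

/-- A morphism of representations from the interval representation `I[a,b]` to `I[c,d]` of the
`A_n` type quiver with orientation `τ` (vertices `1,…,n`; for `1 ≤ i < n` the `i`-th arrow
connects vertices `i` and `i+1`, pointing forward `i → i+1` if `τ i = true` and backward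
`i+1 → i` otherwise).  Since every vertex space of an interval representation is `K` or `0`,
such a morphism is a family of scalars `g i` (the map at vertex `i`), vanishing outside
`[a,b] ∩ [c,d]`, commuting with the structure maps of the two interval representations
(whose map along the `i`-th arrow is the identity iff both endpoints lie in the interval,
and zero otherwise). -/
structure IntervalHom (K : Type*) [Field K] (n : ℕ) (τ : ℕ → Bool) (a b c d : ℕ) where
  g : ℕ → K
  supp : ∀ i, ¬(a ≤ i ∧ i ≤ b ∧ c ≤ i ∧ i ≤ d) → g i = 0
  comm : ∀ i, 1 ≤ i → i < n →
    if τ i then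
      ind K c d i * ind K c d (i + 1) * g i = g (i + 1) * (ind K a b i * ind K a b (i + 1))
    else
      ind K c d i * ind K c d (i + 1) * g (i + 1) = g i * (ind K a b i * ind K a b (i + 1))

/-! A morphism `I[a,b] → I[c,d]` vanishes outside `[a,b] ∩ [c,d]`, and along every arrow with both
ends in that intersection both structure maps are identities, so commutativity forces the
morphism to take equal values at the two ends whatever the orientation. Hence a morphism is
determined by its value at the left end `max a c` of the intersection: the space of morphisms
embeds into `K`. -/

lemma ind_of_mem {K : Type*} [Field K] {a b i : ℕ} (h : a ≤ i ∧ i ≤ b) : ind K a b i = 1 :=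
  if_pos h

lemma ind_of_notMem {K : Type*} [Field K] {a b i : ℕ} (h : ¬(a ≤ i ∧ i ≤ b)) :
    ind K a b i = 0 :=
  if_neg h

namespace IntervalHom

variable {K : Type*} [Field K] {n : ℕ} {τ : ℕ → Bool} {a b c d : ℕ}

instance : Zero (IntervalHom K n τ a b c d) :=
  ⟨⟨fun _ => 0, fun _ _ => rfl, fun i _ _ => by split <;> ring⟩⟩

lemma g_succ_eq (h : IntervalHom K n τ a b c d) {i : ℕ} (h1i : 1 ≤ i) (hin : i < n)
    (hai : a ≤ i) (hci : c ≤ i) (hib : i + 1 ≤ b) (hid : i + 1 ≤ d) :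
    h.g (i + 1) = h.g i := by
  have hcomm := h.comm i h1i hin
  rw [ind_of_mem ⟨hci, by omega⟩, ind_of_mem ⟨by omega, hid⟩, ind_of_mem ⟨hai, by omega⟩,
    ind_of_mem ⟨by omega, hib⟩] at hcomm
  cases hτ : τ i <;>
    simp only [hτ, Bool.false_eq_true, if_false, if_true, mul_one, one_mul] at hcomm
  exacts [hcomm, hcomm.symm]

lemma g_eq_g_max (h : IntervalHom K n τ a b c d) (ha : 1 ≤ a) (hb : b ≤ n) {i : ℕ}
    (hi : max a c ≤ i) (hib : i ≤ b) (hid : i ≤ d) : h.g i = h.g (max a c) := by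
  induction i, hi using Nat.le_induction with
  | base => rfl
  | succ i hi ih =>
    rw [max_le_iff] at hi
    rw [h.g_succ_eq (by omega) (by omega) hi.1 hi.2 hib hid, ih (by omega) (by omega)]

lemma g_eq_mul_ind (h : IntervalHom K n τ a b c d) (ha : 1 ≤ a) (hb : b ≤ n) (i : ℕ) :
    h.g i = h.g (max a c) * ind K (max a c) (min b d) i := by
  have hmem : max a c ≤ i ∧ i ≤ min b d ↔ a ≤ i ∧ i ≤ b ∧ c ≤ i ∧ i ≤ d := by
    rw [max_le_iff, le_min_iff]
    tauto
  by_cases hi : a ≤ i ∧ i ≤ b ∧ c ≤ i ∧ i ≤ d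
  · rw [ind_of_mem (hmem.2 hi), mul_one,
      h.g_eq_g_max ha hb (max_le hi.1 hi.2.2.1) hi.2.1 hi.2.2.2]
  · rw [ind_of_notMem (mt hmem.1 hi), mul_zero, h.supp i hi]

end IntervalHom

theorem intervalHom_dim_le_one (K : Type*) [Field K] (n : ℕ) (τ : ℕ → Bool) (a b c d : ℕ)
    (hab : 1 ≤ a ∧ a ≤ b ∧ b ≤ n) :
    ∃ g₀ : IntervalHom K n τ a b c d, ∀ h : IntervalHom K n τ a b c d,
      ∃ k : K, ∀ i, h.g i = k * g₀.g i := by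
  obtain ⟨ha, -, hb⟩ := hab
  by_cases H : ∃ e : IntervalHom K n τ a b c d, e.g (max a c) ≠ 0
  · obtain ⟨e, he⟩ := H
    refine ⟨e, fun h => ⟨h.g (max a c) / e.g (max a c), fun i => ?_⟩⟩
    rw [h.g_eq_mul_ind ha hb i, e.g_eq_mul_ind ha hb i]
    field_simp
  · push Not at H
    refine ⟨0, fun h => ⟨0, fun i => ?_⟩⟩
    rw [h.g_eq_mul_ind ha hb, H h, zero_mul, zero_mul]
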